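/- Let H be a graph on k ≥ 3 vertices with independence number α, let s be a positive integer divisible by 2k, and let 0 < η < 1. Suppose G is a 2-edge-coloured graph that is (H, η²s)-rich, and X, Y ⊂ V(G) are disjoint s-sets such that G[X] contains a blue H-tiling with s/k copies of H and G[Y] contains a red H-tiling with s/k copies of H. Then there exists T ⊆ X ∪ Y such that G[T] is an (H,η)-cluster. -/

import Mathlib

open SimpleGraph

noncomputable def m2 {V : Type*} [Fintype V] (H : SimpleGraph V) : ℝ :=
  if 2 ≤ H.edgeSet.ncard then
    sSup {x : ℝ | ∃ F : H.Subgraph, 3 ≤ F.verts.ncard ∧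
      x = ((F.edgeSet.ncard : ℝ) - 1) / ((F.verts.ncard : ℝ) - 2)}
  else 1 / 2

open scoped Classical in
noncomputable def indepNum {V : Type*} [Fintype V] (H : SimpleGraph V) : ℕ :=
  Nat.findGreatest (fun m => ∃ s : Finset V, s.card = m ∧
    ∀ x ∈ s, ∀ y ∈ s, x ≠ y → ¬ H.Adj x y) (Fintype.card V)

def IsCopy {W V : Type*} (H : SimpleGraph W) (G : SimpleGraph V) (f : W → V) : Prop :=
  Function.Injective f ∧ ∀ ⦃a b⦄, H.Adj a b → G.Adj (f a) (f b)

def IsMonoCopy {W V : Type*} (H : SimpleGraph W) (G : SimpleGraph V)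
    (χ : Sym2 V → Bool) (col : Bool) (f : W → V) : Prop :=
  IsCopy H G f ∧ ∀ ⦃a b⦄, H.Adj a b → χ s(f a, f b) = col

def MonoTilingOn {W V : Type*} (H : SimpleGraph W) (G : SimpleGraph V)
    (χ : Sym2 V → Bool) (col : Bool) (T : Set V) (m : ℕ) : Prop :=
  ∃ f : Fin m → W → V, (∀ i, IsMonoCopy H G χ col (f i)) ∧
    (∀ i a, f i a ∈ T) ∧
    ∀ i j, i ≠ j → Disjoint (Set.range (f i)) (Set.range (f j))

def IsRich {W V : Type*} [Fintype W] [DecidableEq V] (H : SimpleGraph W)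
    (G : SimpleGraph V) (s' : ℕ) : Prop :=
  ∀ χ : Sym2 V → Bool, ∀ X Y : Finset V, Disjoint X Y → X.card = s' → Y.card = s' →
    (∃ f : W → V, IsMonoCopy H G χ true f ∧ (∀ a, f a ∈ X ∪ Y) ∧
      _root_.indepNum H ≤ (Set.range f ∩ ↑X).ncard) ∨
    (∃ f : W → V, IsMonoCopy H G χ false f ∧ (∀ a, f a ∈ X ∪ Y) ∧
      _root_.indepNum H ≤ (Set.range f ∩ ↑Y).ncard)

def IsCluster {W V : Type*} [Fintype W] (H : SimpleGraph W) (G : SimpleGraph V)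
    (χ : Sym2 V → Bool) (k α : ℕ) (η : ℝ) (T : Set V) : Prop :=
  T.Nonempty ∧
  ∃ mr mb : ℕ, MonoTilingOn H G χ true T mr ∧ MonoTilingOn H G χ false T mb ∧
    (T.ncard : ℝ) / (2 * k - α) - η * T.ncard ≤ mr ∧
    (T.ncard : ℝ) / (2 * k - α) - η * T.ncard ≤ mb

/-!
If `α ≤ 2kη(2k - α)`, the set `X ∪ Y` is already a cluster, tiled by the two given tilings.

Otherwise collect greedily vertex-disjoint red copies of `H` with at least `α` vertices in `X`
and blue copies with at least `α` vertices in `Y`: richness, applied to an `s'`-set of unused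
vertices of `X` and one of `Y`, always yields one more. These `s'`-sets are taken inside pools
of tiles of the blue tiling of `X` (red tiling of `Y`) that grow only as far as needed, so a
pool has at most `(u + s')/k + 1` tiles, `u` being the number of used vertices on its side.
Stop when one colour, say red, has `t` copies. The red copies together with the pooled blue
tiles span the cluster: the red copies share at least `tα` vertices with the pool, while each
of the fewer than `t` blue copies uses at most `k - α` vertices of `X`, so the union has at most
`t(2k - α) + s' + α` vertices.
-/

section

open Finset Function

lemma Finset.exists_subsuperset_mul_card_mem_Icc {ι : Type*} {P Q : Finset ι} {k n : ℕ}
    (hk : 0 < k) (hPQ : P ⊆ Q) (hP : k * #P ≤ n + k) (hQ : n + k ≤ k * #Q) :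
    ∃ P', P ⊆ P' ∧ P' ⊆ Q ∧ k * #P' ∈ Set.Icc n (n + k) := by
  have hn := Nat.lt_mul_div_succ n hk
  have hn' := Nat.mul_div_le n k
  have hQ' : n / k + 1 ≤ #Q := Nat.le_of_mul_le_mul_left (by rw [mul_add]; omega) hk
  obtain ⟨P', hPP', hP'Q, hcard⟩ :=
    exists_subsuperset_card_eq hPQ (le_max_left #P (n / k + 1)) (max_le (card_le_card hPQ) hQ')
  refine ⟨P', hPP', hP'Q, ?_⟩
  rw [hcard, Set.mem_Icc]
  rcases max_cases #P (n / k + 1) with ⟨h, hle⟩ | ⟨h, -⟩ <;> rw [h]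
  · have := Nat.mul_le_mul_left k hle
    omega
  · rw [mul_add] at hn ⊢
    omega

lemma Finset.card_inter_add_card_inter_le {α : Type*} [DecidableEq α] (A : Finset α)
    {X Y : Finset α} (hXY : Disjoint X Y) : #(A ∩ X) + #(A ∩ Y) ≤ #A := by
  rw [← card_union_of_disjoint (disjoint_of_subset_left inter_subset_right
    (disjoint_of_subset_right inter_subset_right hXY))]
  exact card_le_card (union_subset inter_subset_left inter_subset_left)

lemma disjoint_bool_not {α : Type*} {Z : Bool → Finset α} (hZ : Disjoint (Z true) (Z false))
    (c : Bool) : Disjoint (Z c) (Z !c) := by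
  cases c
  exacts [hZ.symm, hZ]

lemma inter_subset_of_subset_union_bool {α : Type*} [DecidableEq α] {Z Z' : Bool → Finset α}
    (hZ : Disjoint (Z true) (Z false)) (hZ' : ∀ d, Z' d ⊆ Z d) {A : Finset α}
    (hA : A ⊆ Z' true ∪ Z' false) (d : Bool) : A ∩ Z d ⊆ Z' d := by
  intro x hx
  obtain ⟨hxA, hxZ⟩ := mem_inter.1 hx
  cases d <;> rcases mem_union.1 (hA hxA) with h | h
  exacts [absurd hxZ (disjoint_left.1 hZ (hZ' true h)), h, h,
    absurd hxZ (disjoint_right.1 hZ (hZ' false h))]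

lemma div_sub_mul_le_of_le {N t k α s' η : ℝ} (hη : 0 ≤ η) (ht : 0 ≤ t) (hαk : α ≤ k) (hk : 0 < k)
    (hN : N ≤ t * (2 * k - α) + s' + α) (hkt : k * t ≤ N) (hs' : s' + k ≤ η * t * k ^ 2) :
    N / (2 * k - α) - η * N ≤ t := by
  rw [sub_le_iff_le_add, div_le_iff₀ (by linarith)]
  nlinarith [mul_le_mul_of_nonneg_left (mul_le_mul hkt (show k ≤ 2 * k - α by linarith) hk.le
    ((mul_nonneg hk.le ht).trans hkt)) hη]

/-- The first bound lets the slack `η |T|` of a cluster absorb the overshoot `s' + k` of a pool;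
the second keeps the tilings from running out during the fewer than `2t` rounds. -/
lemma exists_greedy_length {k s s' : ℕ} {η : ℝ} (hk : 3 ≤ k) (hη : 0 < η) (hηk : 2 * k * η ≤ 1)
    (hs' : 1 ≤ s') (hs's : (s' : ℝ) ≤ η ^ 2 * s) :
    ∃ t : ℕ, 0 < t ∧ (s' : ℝ) + k ≤ η * t * k ^ 2 ∧ 2 * t * k + s' + k ≤ s := by
  have hk' : (3 : ℝ) ≤ k := by exact_mod_cast hk
  have hs'1 : (1 : ℝ) ≤ s' := by exact_mod_cast hs'
  have hden : 0 < η * k ^ 2 := by positivity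
  set t := ⌈((s' : ℝ) + k) / (η * k ^ 2)⌉₊
  have hlow : (s' : ℝ) + k ≤ η * t * k ^ 2 := by
    have := Nat.le_ceil (((s' : ℝ) + k) / (η * k ^ 2))
    rw [div_le_iff₀ hden] at this
    linarith
  have hup : η * k ^ 2 * t ≤ s' + k + η * k ^ 2 := by
    have := (Nat.ceil_lt_add_one (by positivity : 0 ≤ ((s' : ℝ) + k) / (η * k ^ 2))).le
    rw [← sub_le_iff_le_add, le_div_iff₀ hden] at this
    linarith
  refine ⟨t, Nat.pos_of_ne_zero fun h => by simp [h] at hlow; linarith, hlow, ?_⟩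
  have hηs : 1 ≤ η ^ 2 * s := hs'1.trans hs's
  have hcoef : 2 * η + 2 * k * η + 3 * (η * k) ^ 2 + η ^ 2 * k ≤ k := by nlinarith
  have hscaled : η * k * (2 * t * k + s' + k) ≤ η * k * s := by
    calc η * k * (2 * t * k + s' + k) ≤ 2 * s' + 2 * k + 3 * η * k ^ 2 + η * k * s' := by
          nlinarith
      _ ≤ η * s * (2 * η + 2 * k * η + 3 * (η * k) ^ 2 + η ^ 2 * k) := by
          nlinarith [mul_le_mul_of_nonneg_left hηs (by positivity : (0 : ℝ) ≤ k),
            mul_le_mul_of_nonneg_left hηs (by positivity : (0 : ℝ) ≤ η * k ^ 2),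
            mul_le_mul_of_nonneg_left hs's (by positivity : (0 : ℝ) ≤ η * k)]
      _ ≤ η * s * k := mul_le_mul_of_nonneg_left hcoef (by positivity)
      _ = η * k * s := by ring
  exact_mod_cast le_of_mul_le_mul_left hscaled (by positivity)

variable {W V : Type*}

lemma MonoTilingOn.mono {H : SimpleGraph W} {G : SimpleGraph V} {χ : Sym2 V → Bool} {c : Bool}
    {T T' : Set V} {m : ℕ} (h : MonoTilingOn H G χ c T m) (hT : T ⊆ T') :
    MonoTilingOn H G χ c T' m := by
  obtain ⟨f, hmono, hmem, hdisj⟩ := h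
  exact ⟨f, hmono, fun i a => hT (hmem i a), hdisj⟩

lemma isCluster_of_monoTilingOn [Fintype W] {H : SimpleGraph W} {G : SimpleGraph V}
    {χ : Sym2 V → Bool} {k α : ℕ} {η : ℝ} {T : Set V} (hT : T.Nonempty) (c : Bool) {m m' : ℕ}
    (hc : MonoTilingOn H G χ c T m) (hnc : MonoTilingOn H G χ (!c) T m')
    (hm : (T.ncard : ℝ) / (2 * k - α) - η * T.ncard ≤ m)
    (hm' : (T.ncard : ℝ) / (2 * k - α) - η * T.ncard ≤ m') : IsCluster H G χ k α η T := by
  cases c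
  exacts [⟨hT, m', m, hnc, hc, hm', hm⟩, ⟨hT, m, m', hc, hnc, hm, hm'⟩]

variable [Fintype W] [DecidableEq V]

def verts (f : W → V) : Finset V := univ.image f

def cover (𝓕 : Finset (W → V)) : Finset V := 𝓕.biUnion verts

def IsMonoPacking (H : SimpleGraph W) (G : SimpleGraph V) (χ : Sym2 V → Bool) (c : Bool)
    (𝓕 : Finset (W → V)) : Prop :=
  (∀ f ∈ 𝓕, IsMonoCopy H G χ c f) ∧ (𝓕 : Set (W → V)).PairwiseDisjoint verts

lemma coe_verts (f : W → V) : (verts f : Set V) = Set.range f := by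
  simp [verts]

lemma mem_verts (f : W → V) (a : W) : f a ∈ verts f :=
  mem_image_of_mem f (mem_univ a)

lemma verts_subset_iff {f : W → V} {T : Finset V} : verts f ⊆ T ↔ ∀ a, f a ∈ T := by
  simp [verts, image_subset_iff]

lemma card_verts {f : W → V} (hf : Function.Injective f) : #(verts f) = Fintype.card W :=
  card_image_of_injective _ hf

lemma verts_subset_cover {𝓕 : Finset (W → V)} {f : W → V} (hf : f ∈ 𝓕) :
    verts f ⊆ cover 𝓕 :=
  subset_biUnion_of_mem verts hf

lemma cover_subset_iff {𝓕 : Finset (W → V)} {T : Finset V} :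
    cover 𝓕 ⊆ T ↔ ∀ f ∈ 𝓕, verts f ⊆ T :=
  biUnion_subset

lemma cover_insert (f : W → V) (𝓕 : Finset (W → V)) :
    cover (insert f 𝓕) = verts f ∪ cover 𝓕 :=
  biUnion_insert

lemma cover_mono {𝓕 𝓖 : Finset (W → V)} (h : 𝓕 ⊆ 𝓖) : cover 𝓕 ⊆ cover 𝓖 :=
  biUnion_subset_biUnion_of_subset_left _ h

lemma card_cover_le (𝓕 : Finset (W → V)) : #(cover 𝓕) ≤ Fintype.card W * #𝓕 := by
  calc #(cover 𝓕) ≤ ∑ f ∈ 𝓕, #(verts f) := card_biUnion_le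
    _ ≤ ∑ _f ∈ 𝓕, Fintype.card W := sum_le_sum fun f _ => card_image_le.trans_eq card_univ
    _ = Fintype.card W * #𝓕 := by rw [sum_const, smul_eq_mul, mul_comm]

lemma card_cover_inter_le (𝓕 : Finset (W → V)) {A : Finset V} {m : ℕ}
    (hm : ∀ f ∈ 𝓕, #(verts f ∩ A) ≤ m) : #(cover 𝓕 ∩ A) ≤ #𝓕 * m := by
  rw [cover, biUnion_inter, ← smul_eq_mul]
  exact card_biUnion_le.trans (sum_le_card_nsmul _ _ _ hm)

namespace IsMonoPacking

variable {H : SimpleGraph W} {G : SimpleGraph V} {χ : Sym2 V → Bool} {c : Bool}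
  {𝓕 : Finset (W → V)}

lemma card_cover (h : IsMonoPacking H G χ c 𝓕) : #(cover 𝓕) = Fintype.card W * #𝓕 := by
  rw [cover, card_biUnion h.2, sum_congr rfl fun f hf => card_verts (h.1 f hf).1.1,
    sum_const, smul_eq_mul, mul_comm]

lemma card_mul_le_card_cover_inter (h : IsMonoPacking H G χ c 𝓕) {A : Finset V} {m : ℕ}
    (hm : ∀ f ∈ 𝓕, m ≤ #(verts f ∩ A)) : #𝓕 * m ≤ #(cover 𝓕 ∩ A) := by
  rw [cover, biUnion_inter, card_biUnion (h.2.mono fun f => inter_subset_left), ← smul_eq_mul]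
  exact card_nsmul_le_sum _ _ _ hm

lemma mono {𝓖 : Finset (W → V)} (h : IsMonoPacking H G χ c 𝓕) (h𝓖 : 𝓖 ⊆ 𝓕) :
    IsMonoPacking H G χ c 𝓖 :=
  ⟨fun f hf => h.1 f (h𝓖 hf), h.2.subset (coe_subset.2 h𝓖)⟩

lemma insert (h : IsMonoPacking H G χ c 𝓕) {f : W → V} (hf : IsMonoCopy H G χ c f)
    (hdisj : Disjoint (verts f) (cover 𝓕)) : IsMonoPacking H G χ c (insert f 𝓕) := by
  refine ⟨fun g hg => ?_, ?_⟩
  · rcases mem_insert.1 hg with rfl | hg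
    exacts [hf, h.1 g hg]
  · rw [coe_insert]
    exact h.2.insert fun g hg _ => hdisj.mono_right (verts_subset_cover hg)

lemma monoTilingOn (h : IsMonoPacking H G χ c 𝓕) :
    MonoTilingOn H G χ c (cover 𝓕 : Set V) #𝓕 := by
  refine ⟨fun i => (𝓕.equivFin.symm i : W → V), fun i => h.1 _ (coe_mem _),
    fun i a => verts_subset_cover (coe_mem _) (mem_verts _ a), fun i j hij => ?_⟩
  rw [← coe_verts, ← coe_verts, disjoint_coe]
  exact h.2 (coe_mem _) (coe_mem _) fun he => hij (𝓕.equivFin.symm.injective (Subtype.ext he))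

end IsMonoPacking

lemma MonoTilingOn.exists_isMonoPacking [Nonempty W] {H : SimpleGraph W} {G : SimpleGraph V}
    {χ : Sym2 V → Bool} {c : Bool} {T : Finset V} {m : ℕ} (h : MonoTilingOn H G χ c T m) :
    ∃ 𝓕, IsMonoPacking H G χ c 𝓕 ∧ #𝓕 = m ∧ cover 𝓕 ⊆ T := by
  obtain ⟨f, hmono, hmem, hdisj⟩ := h
  have hinj : Function.Injective f := fun i j hij => by
    by_contra hne
    obtain ⟨a⟩ := ‹Nonempty W›
    exact (hdisj i j hne).ne_of_mem (Set.mem_range_self a) (hij ▸ Set.mem_range_self a) rfl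
  refine ⟨univ.image f, ⟨?_, ?_⟩, by simp [card_image_of_injective _ hinj], ?_⟩
  · simp only [mem_image, mem_univ, true_and]
    rintro _ ⟨i, rfl⟩
    exact hmono i
  · simp only [coe_image, coe_univ, Set.image_univ]
    rintro _ ⟨i, rfl⟩ _ ⟨j, rfl⟩ hij
    show Disjoint (verts _) (verts _)
    rw [← disjoint_coe, coe_verts, coe_verts]
    exact hdisj i j fun h => hij (h ▸ rfl)
  · simp only [cover_subset_iff, mem_image, mem_univ, true_and, verts_subset_iff]
    rintro _ ⟨i, rfl⟩ a
    exact hmem i a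

lemma isCluster_union {H : SimpleGraph W} {G : SimpleGraph V} {χ : Sym2 V → Bool}
    {k α s : ℕ} {η : ℝ} {X Y : Finset V} (hXY : Disjoint X Y) (hX : #X = s) (hY : #Y = s)
    (hs : 0 < s) (hks : k ∣ s) (hαk : α ≤ k) (hk : 0 < k)
    (hXb : MonoTilingOn H G χ false X (s / k)) (hYr : MonoTilingOn H G χ true Y (s / k))
    (hη : α ≤ 2 * k * η * (2 * k - α)) : IsCluster H G χ k α η (↑X ∪ ↑Y) := by
  have hcard : ((↑X ∪ ↑Y : Set V)).ncard = 2 * (k * (s / k)) := by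
    rw [← coe_union, Set.ncard_coe_finset, card_union_of_disjoint hXY, hX, hY,
      Nat.mul_div_cancel' hks, two_mul]
  have hbound : ((↑X ∪ ↑Y : Set V).ncard : ℝ) / (2 * k - α) - η * (↑X ∪ ↑Y : Set V).ncard ≤
      ↑(s / k) := by
    have hαk' : (α : ℝ) ≤ k := by exact_mod_cast hαk
    have hk' : (0 : ℝ) < k := by exact_mod_cast hk
    rw [hcard, sub_le_iff_le_add, div_le_iff₀ (by linarith)]
    push_cast
    nlinarith [mul_le_mul_of_nonneg_left hη (Nat.cast_nonneg (α := ℝ) (s / k))]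
  obtain ⟨x, hx⟩ := card_pos.1 (hX ▸ hs)
  exact ⟨⟨x, Or.inl hx⟩, s / k, s / k, hYr.mono Set.subset_union_right,
    hXb.mono Set.subset_union_left, hbound, hbound⟩

def used (𝓒 : Bool → Finset (W → V)) : Finset V := cover (𝓒 true) ∪ cover (𝓒 false)

lemma cover_subset_used (𝓒 : Bool → Finset (W → V)) (c : Bool) : cover (𝓒 c) ⊆ used 𝓒 := by
  cases c
  exacts [subset_union_right, subset_union_left]

lemma used_eq_cover_union (𝓒 : Bool → Finset (W → V)) (c : Bool) :
    used 𝓒 = cover (𝓒 c) ∪ cover (𝓒 !c) := by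
  cases c
  exacts [union_comm _ _, rfl]

lemma used_update_insert (𝓒 : Bool → Finset (W → V)) (c : Bool) (f : W → V) :
    used (update 𝓒 c (insert f (𝓒 c))) = verts f ∪ used 𝓒 := by
  cases c <;> simp [used, cover_insert, union_left_comm]

lemma card_used_le (𝓒 : Bool → Finset (W → V)) :
    #(used 𝓒) ≤ Fintype.card W * (#(𝓒 true) + #(𝓒 false)) := by
  rw [mul_add]
  exact (card_union_le _ _).trans (add_le_add (card_cover_le _) (card_cover_le _))

variable (H : SimpleGraph W) (G : SimpleGraph V) (χ : Sym2 V → Bool) in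
/-- A stage of the greedy construction. The side `Z c` (`Z true = X`, `Z false = Y`) is tiled in
colour `!c` by `tiles c`, and `copies c` are the copies of colour `c` found so far. -/
structure GreedyState (Z : Bool → Finset V) (tiles : Bool → Finset (W → V)) (s' : ℕ) where
  copies : Bool → Finset (W → V)
  pool : Bool → Finset (W → V)
  isMonoPacking : ∀ c, IsMonoPacking H G χ c (copies c)
  cover_subset : ∀ c, cover (copies c) ⊆ Z true ∪ Z false
  heavy : ∀ c, ∀ f ∈ copies c, _root_.indepNum H ≤ #(verts f ∩ Z c)
  pool_subset : ∀ c, pool c ⊆ tiles c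
  used_inter_subset : ∀ c, used copies ∩ Z c ⊆ cover (pool c)
  card_pool_le : ∀ c, Fintype.card W * #(pool c) ≤ #(used copies ∩ Z c) + s' + Fintype.card W

lemma ncard_range_inter (f : W → V) (X : Finset V) : (Set.range f ∩ ↑X).ncard = #(verts f ∩ X) := by
  rw [← coe_verts, ← coe_inter, Set.ncard_coe_finset]

lemma IsRich.exists_heavy_copy {H : SimpleGraph W} {G : SimpleGraph V} {s' : ℕ}
    (hrich : IsRich H G s') (χ : Sym2 V → Bool) {Z' : Bool → Finset V}
    (hZ' : Disjoint (Z' true) (Z' false)) (hcard : ∀ d, #(Z' d) = s') :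
    ∃ c f, IsMonoCopy H G χ c f ∧ verts f ⊆ Z' true ∪ Z' false ∧
      _root_.indepNum H ≤ #(verts f ∩ Z' c) := by
  rcases hrich χ _ _ hZ' (hcard true) (hcard false) with ⟨f, hf, hmem, hα⟩ | ⟨f, hf, hmem, hα⟩
  · exact ⟨true, f, hf, verts_subset_iff.2 hmem, ncard_range_inter f _ ▸ hα⟩
  · exact ⟨false, f, hf, verts_subset_iff.2 hmem, ncard_range_inter f _ ▸ hα⟩

lemma IsRich.pos [Nonempty W] {H : SimpleGraph W} {G : SimpleGraph V} {s' : ℕ}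
    (hrich : IsRich H G s') : 0 < s' := by
  by_contra! h
  obtain ⟨a⟩ := ‹Nonempty W›
  rcases hrich (fun _ => true) ∅ ∅ (disjoint_empty_left _) (by simp; omega) (by simp; omega) with
    ⟨f, -, hf, -⟩ | ⟨f, -, hf, -⟩ <;> simpa using hf a

lemma indepNum_le_card (H : SimpleGraph W) : _root_.indepNum H ≤ Fintype.card W := by
  classical
  exact Nat.findGreatest_le _

namespace GreedyState

variable {H : SimpleGraph W} {G : SimpleGraph V} {χ : Sym2 V → Bool} {Z : Bool → Finset V}
  {tiles : Bool → Finset (W → V)} {s' : ℕ}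

def empty : GreedyState H G χ Z tiles s' where
  copies _ := ∅
  pool _ := ∅
  isMonoPacking _ := ⟨by simp, by simp⟩
  cover_subset _ := by simp [cover]
  heavy _ := by simp
  pool_subset _ := empty_subset _
  used_inter_subset _ := by simp [used, cover]
  card_pool_le _ := by simp

lemma exists_free_subsets [Nonempty W] (htiles : ∀ d, IsMonoPacking H G χ (!d) (tiles d))
    (htilesZ : ∀ d, cover (tiles d) ⊆ Z d) (S : GreedyState H G χ Z tiles s')
    (hsupply : ∀ d, #(used S.copies ∩ Z d) + s' + Fintype.card W ≤
      Fintype.card W * #(tiles d)) (d : Bool) :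
    ∃ P Z', S.pool d ⊆ P ∧ P ⊆ tiles d ∧
      Fintype.card W * #P ≤ #(used S.copies ∩ Z d) + s' + Fintype.card W ∧
      Z' ⊆ cover P ∧ Disjoint Z' (used S.copies) ∧ #Z' = s' := by
  obtain ⟨P, hSP, hP, hlow, hup⟩ := exists_subsuperset_mul_card_mem_Icc Fintype.card_pos
    (S.pool_subset d) (S.card_pool_le d) (hsupply d)
  have hcover : #(cover P) = Fintype.card W * #P := ((htiles d).mono hP).card_cover
  have hcap : cover P ∩ used S.copies ⊆ used S.copies ∩ Z d := by
    rw [inter_comm]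
    exact inter_subset_inter_left ((cover_mono hP).trans (htilesZ d))
  have hfree : s' ≤ #(cover P \ used S.copies) := by
    have := card_sdiff_add_card_inter (cover P) (used S.copies)
    have := card_le_card hcap
    omega
  obtain ⟨Z', hZ', hcard⟩ := exists_subset_card_eq hfree
  exact ⟨P, Z', hSP, hP, hup, hZ'.trans sdiff_subset,
    disjoint_of_subset_left hZ' sdiff_disjoint, hcard⟩

lemma exists_insert [Nonempty W] (hZ : Disjoint (Z true) (Z false))
    (S : GreedyState H G χ Z tiles s') {Z' : Bool → Finset V}
    {P : Bool → Finset (W → V)} (hSP : ∀ d, S.pool d ⊆ P d) (hP : ∀ d, P d ⊆ tiles d)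
    (hPcard : ∀ d, Fintype.card W * #(P d) ≤ #(used S.copies ∩ Z d) + s' + Fintype.card W)
    (hZ'P : ∀ d, Z' d ⊆ cover (P d)) (hZ'Z : ∀ d, Z' d ⊆ Z d)
    (hZ'used : ∀ d, Disjoint (Z' d) (used S.copies))
    {c : Bool} {f : W → V} (hf : IsMonoCopy H G χ c f) (hfZ' : verts f ⊆ Z' true ∪ Z' false)
    (hfheavy : _root_.indepNum H ≤ #(verts f ∩ Z' c)) :
    ∃ S' : GreedyState H G χ Z tiles s',
      #(S'.copies c) = #(S.copies c) + 1 ∧ S'.copies (!c) = S.copies (!c) := by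
  have hfresh : Disjoint (verts f) (used S.copies) :=
    disjoint_of_subset_left hfZ' (disjoint_union_left.2 ⟨hZ'used true, hZ'used false⟩)
  have hfS : f ∉ S.copies c := fun hmem => by
    obtain ⟨a⟩ := ‹Nonempty W›
    exact disjoint_left.1 hfresh (mem_verts f a)
      (cover_subset_used _ c (verts_subset_cover hmem (mem_verts f a)))
  have hused : used (update S.copies c (insert f (S.copies c))) = verts f ∪ used S.copies :=
    used_update_insert _ _ _
  refine ⟨⟨update S.copies c (insert f (S.copies c)), P,
    (forall_update_iff _ fun d 𝓕 => IsMonoPacking H G χ d 𝓕).2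
      ⟨(S.isMonoPacking c).insert hf (disjoint_of_subset_right (cover_subset_used _ c) hfresh),
        fun d _ => S.isMonoPacking d⟩,
    (forall_update_iff _ fun _ 𝓕 => cover 𝓕 ⊆ Z true ∪ Z false).2
      ⟨by rw [cover_insert]
          exact union_subset (hfZ'.trans (union_subset_union (hZ'Z true) (hZ'Z false)))
            (S.cover_subset c),
        fun d _ => S.cover_subset d⟩,
    (forall_update_iff _ fun d 𝓕 => ∀ g ∈ 𝓕, _root_.indepNum H ≤ #(verts g ∩ Z d)).2
      ⟨(forall_mem_insert _ _ _).2
          ⟨hfheavy.trans (card_le_card (inter_subset_inter_left (hZ'Z c))), S.heavy c⟩,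
        fun d _ => S.heavy d⟩,
    hP, fun d => ?_, fun d => ?_⟩, ?_, ?_⟩
  · rw [hused, union_inter_distrib_right]
    exact union_subset ((inter_subset_of_subset_union_bool hZ hZ'Z hfZ' d).trans (hZ'P d))
      ((S.used_inter_subset d).trans (cover_mono (hSP d)))
  · rw [hused]
    exact (hPcard d).trans (by gcongr; exact subset_union_right)
  · exact (congrArg card (update_self c _ S.copies)).trans (card_insert_of_notMem hfS)
  · exact update_of_ne (Bool.not_ne_self c) ..

lemma exists_step [Nonempty W] (hrich : IsRich H G s') (hZ : Disjoint (Z true) (Z false))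
    (htiles : ∀ d, IsMonoPacking H G χ (!d) (tiles d)) (htilesZ : ∀ d, cover (tiles d) ⊆ Z d)
    (S : GreedyState H G χ Z tiles s')
    (hsupply : ∀ d, #(used S.copies ∩ Z d) + s' + Fintype.card W ≤
      Fintype.card W * #(tiles d)) :
    ∃ (S' : GreedyState H G χ Z tiles s') (c : Bool),
      #(S'.copies c) = #(S.copies c) + 1 ∧ S'.copies (!c) = S.copies (!c) := by
  choose P Z' hSP hP hPcard hZ'P hZ'used hZ'card using
    S.exists_free_subsets htiles htilesZ hsupply
  have hZ'Z : ∀ d, Z' d ⊆ Z d := fun d => (hZ'P d).trans ((cover_mono (hP d)).trans (htilesZ d))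
  obtain ⟨c, f, hf, hfZ', hfheavy⟩ := hrich.exists_heavy_copy χ
    (disjoint_of_subset_left (hZ'Z true) (disjoint_of_subset_right (hZ'Z false) hZ)) hZ'card
  obtain ⟨S', hS'⟩ := S.exists_insert hZ hSP hP hPcard hZ'P hZ'Z hZ'used hf hfZ' hfheavy
  exact ⟨S', c, hS'⟩

theorem exists_card_copies_eq [Nonempty W] (hrich : IsRich H G s')
    (hZ : Disjoint (Z true) (Z false))
    (htiles : ∀ d, IsMonoPacking H G χ (!d) (tiles d)) (htilesZ : ∀ d, cover (tiles d) ⊆ Z d)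
    {t : ℕ} (hsupply : ∀ d, 2 * t * Fintype.card W + s' + Fintype.card W ≤
      Fintype.card W * #(tiles d))
    (S : GreedyState H G χ Z tiles s') (hS : ∀ c, #(S.copies c) < t) :
    ∃ (S' : GreedyState H G χ Z tiles s') (c : Bool), #(S'.copies c) = t ∧ #(S'.copies !c) < t := by
  have hused : ∀ d, #(used S.copies ∩ Z d) + s' + Fintype.card W ≤
      Fintype.card W * #(tiles d) := fun d => by
    have := card_le_card (inter_subset_left (s₁ := used S.copies) (s₂ := Z d))
    have := card_used_le S.copies
    have := hS true
    have := hS false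
    have := Nat.mul_le_mul_left (Fintype.card W)
      (show #(S.copies true) + #(S.copies false) ≤ 2 * t by omega)
    linarith [hsupply d]
  obtain ⟨S', c, hc, hnc⟩ := S.exists_step hrich hZ htiles htilesZ hused
  by_cases ht : #(S'.copies c) = t
  · exact ⟨S', c, ht, hnc ▸ hS !c⟩
  · refine exists_card_copies_eq hrich hZ htiles htilesZ hsupply S' fun d => ?_
    rcases Bool.eq_or_eq_not d c with rfl | rfl
    · have := hS d
      omega
    · exact hnc ▸ hS !c
termination_by 2 * t - (#(S.copies true) + #(S.copies false))
decreasing_by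
  have := hS true
  have := hS false
  cases c <;> simp only [Bool.not_false, Bool.not_true] at hnc <;> rw [hnc] <;> omega

lemma card_verts_inter_le (hZ : Disjoint (Z true) (Z false)) (S : GreedyState H G χ Z tiles s')
    {c : Bool} {f : W → V} (hf : f ∈ S.copies !c) :
    #(verts f ∩ Z c) ≤ Fintype.card W - _root_.indepNum H := by
  have := card_inter_add_card_inter_le (verts f) (disjoint_bool_not hZ c)
  have := card_verts ((S.isMonoPacking !c).1 f hf).1.1
  have := S.heavy (!c) f hf
  omega

lemma card_used_inter_le (hZ : Disjoint (Z true) (Z false)) (S : GreedyState H G χ Z tiles s')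
    (c : Bool) : #(used S.copies ∩ Z c) ≤
      #(cover (S.copies c) ∩ Z c) + #(S.copies !c) * (Fintype.card W - _root_.indepNum H) := by
  rw [used_eq_cover_union _ c, union_inter_distrib_right]
  exact (card_union_le _ _).trans
    (Nat.add_le_add_left (card_cover_inter_le _ fun _ hf => S.card_verts_inter_le hZ hf) _)

lemma cover_inter_cover_eq (htilesZ : ∀ d, cover (tiles d) ⊆ Z d)
    (S : GreedyState H G χ Z tiles s') {c : Bool} {P : Finset (W → V)} (hSP : S.pool c ⊆ P)
    (hP : P ⊆ tiles c) : cover (S.copies c) ∩ cover P = cover (S.copies c) ∩ Z c :=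
  subset_antisymm (inter_subset_inter_left ((cover_mono hP).trans (htilesZ c)))
    (subset_inter inter_subset_left ((inter_subset_inter_right (cover_subset_used _ c)).trans
      ((S.used_inter_subset c).trans (cover_mono hSP))))

lemma card_cover_union_le (hZ : Disjoint (Z true) (Z false))
    (htiles : ∀ d, IsMonoPacking H G χ (!d) (tiles d)) (htilesZ : ∀ d, cover (tiles d) ⊆ Z d)
    (S : GreedyState H G χ Z tiles s') {c : Bool} {t : ℕ} (hc : #(S.copies c) = t)
    (hnc : #(S.copies !c) < t) {P : Finset (W → V)} (hSP : S.pool c ⊆ P) (hP : P ⊆ tiles c)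
    (hPcard : #P = max #(S.pool c) t) :
    #(cover (S.copies c) ∪ cover P) ≤
      t * (2 * Fintype.card W - _root_.indepNum H) + s' + _root_.indepNum H := by
  have hαk := indepNum_le_card H
  have hunion := card_union_add_card_inter (cover (S.copies c)) (cover P)
  rw [cover_inter_cover_eq htilesZ S hSP hP, (S.isMonoPacking c).card_cover,
    ((htiles c).mono hP).card_cover, hPcard, hc] at hunion
  have hheavy := hc ▸ (S.isMonoPacking c).card_mul_le_card_cover_inter (S.heavy c)
  have hpool := S.card_pool_le c
  have hused := S.card_used_inter_le hZ c
  have hlight := Nat.mul_le_mul_right (Fintype.card W - _root_.indepNum H) hnc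
  rw [Nat.succ_mul] at hlight
  have htwo : 2 * Fintype.card W - _root_.indepNum H =
      Fintype.card W + (Fintype.card W - _root_.indepNum H) := by omega
  have hsplit := congrArg (t * ·) (Nat.add_sub_cancel' hαk)
  simp only [mul_add] at hsplit
  rw [htwo, mul_add]
  rcases max_cases #(S.pool c) t with ⟨hm, -⟩ | ⟨hm, -⟩ <;> rw [hm] at hunion <;>
    generalize Fintype.card W = k at * <;> generalize _root_.indepNum H = α at * <;>
    rw [mul_comm k t] at hunion <;> omega

theorem exists_isCluster [Nonempty W] (hZ : Disjoint (Z true) (Z false))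
    (htiles : ∀ d, IsMonoPacking H G χ (!d) (tiles d)) (htilesZ : ∀ d, cover (tiles d) ⊆ Z d)
    (S : GreedyState H G χ Z tiles s') {c : Bool} {t : ℕ} (hc : #(S.copies c) = t)
    (hnc : #(S.copies !c) < t) (ht : t ≤ #(tiles c)) {η : ℝ} (hη : 0 ≤ η)
    (hs' : (s' : ℝ) + Fintype.card W ≤ η * t * Fintype.card W ^ 2) :
    ∃ T : Finset V, T ⊆ Z true ∪ Z false ∧
      IsCluster H G χ (Fintype.card W) (_root_.indepNum H) η T := by
  obtain ⟨P, hSP, hP, hPcard⟩ := exists_subsuperset_card_eq (S.pool_subset c)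
    (le_max_left _ t) (max_le (card_le_card (S.pool_subset c)) ht)
  have hR := S.isMonoPacking c
  have hPpack : IsMonoPacking H G χ (!c) P := (htiles c).mono hP
  set T := cover (S.copies c) ∪ cover P
  have hkt : Fintype.card W * t ≤ #T := hc ▸ hR.card_cover ▸ card_le_card subset_union_left
  have hN := S.card_cover_union_le hZ htiles htilesZ hc hnc hSP hP hPcard
  have hαk := indepNum_le_card H
  have hN' : (#T : ℝ) ≤ t * (2 * Fintype.card W - _root_.indepNum H) + s' + _root_.indepNum H := by
    have := (Nat.cast_le (α := ℝ)).2 hN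
    push_cast [Nat.cast_sub (show _root_.indepNum H ≤ 2 * Fintype.card W by omega)] at this
    exact this
  have hbound : (#T : ℝ) / (2 * Fintype.card W - _root_.indepNum H) - η * #T ≤ t :=
    div_sub_mul_le_of_le hη (Nat.cast_nonneg t) (by exact_mod_cast hαk)
      (by exact_mod_cast Fintype.card_pos) hN' (by exact_mod_cast hkt) hs'
  obtain ⟨f, hf⟩ : (S.copies c).Nonempty := card_pos.1 (hc ▸ (Nat.zero_le _).trans_lt hnc)
  refine ⟨T, union_subset (S.cover_subset c) (((cover_mono hP).trans (htilesZ c)).trans ?_), ?_⟩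
  · cases c
    exacts [subset_union_right, subset_union_left]
  refine isCluster_of_monoTilingOn ⟨f (Classical.arbitrary W), ?_⟩ c
    (hc ▸ hR.monoTilingOn.mono (coe_subset.2 subset_union_left))
    (hPpack.monoTilingOn.mono (coe_subset.2 subset_union_right)) ?_ ?_
  · exact subset_union_left (verts_subset_cover hf (mem_verts f _))
  · rwa [Set.ncard_coe_finset]
  · rw [Set.ncard_coe_finset, hPcard]
    exact hbound.trans (by exact_mod_cast le_max_right _ _)

end GreedyState

end

theorem stmt11_general {W V : Type*} [Fintype W] [DecidableEq V] (H : SimpleGraph W) (k α : ℕ)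
    (hk : Fintype.card W = k) (hk3 : 3 ≤ k) (hα : _root_.indepNum H = α)
    (s : ℕ) (hs : 0 < s) (hdvd : 2 * k ∣ s)
    (η : ℝ) (hη0 : 0 < η)
    (G : SimpleGraph V) (χ : Sym2 V → Bool)
    (hrich : IsRich H G (Nat.floor (η ^ 2 * s)))
    (X Y : Finset V) (hXY : Disjoint X Y) (hX : X.card = s) (hY : Y.card = s)
    (hXb : MonoTilingOn H G χ false (↑X) (s / k))
    (hYr : MonoTilingOn H G χ true (↑Y) (s / k)) :
    ∃ T : Set V, T ⊆ ↑X ∪ ↑Y ∧ IsCluster H G χ k α η T := by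
  subst hk hα
  have : Nonempty W := Fintype.card_pos_iff.1 (by omega)
  have hks : Fintype.card W ∣ s := (Dvd.intro_left 2 rfl).trans hdvd
  have hαk := indepNum_le_card H
  by_cases hlarge : (_root_.indepNum H : ℝ) ≤
      2 * Fintype.card W * η * (2 * Fintype.card W - _root_.indepNum H)
  · exact ⟨_, subset_rfl, isCluster_union hXY hX hY hs hks hαk Fintype.card_pos hXb hYr hlarge⟩
  have hηk : 2 * Fintype.card W * η ≤ 1 := by
    have : (_root_.indepNum H : ℝ) ≤ Fintype.card W := by exact_mod_cast hαk
    nlinarith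
  obtain ⟨t, ht, hnum, hsupply⟩ := exists_greedy_length hk3 hη0 hηk hrich.pos
    (Nat.floor_le (by positivity))
  obtain ⟨BX, hBX, hBXcard, hBXX⟩ := hXb.exists_isMonoPacking
  obtain ⟨RY, hRY, hRYcard, hRYY⟩ := hYr.exists_isMonoPacking
  have htiles : ∀ d, IsMonoPacking H G χ (!d) (cond d BX RY)
    | true => hBX
    | false => hRY
  have htilesZ : ∀ d, cover (cond d BX RY) ⊆ cond d X Y
    | true => hBXX
    | false => hRYY
  have hcard : ∀ d, Fintype.card W * (cond d BX RY).card = s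
    | true => by rw [cond_true, hBXcard, Nat.mul_div_cancel' hks]
    | false => by rw [cond_false, hRYcard, Nat.mul_div_cancel' hks]
  obtain ⟨S, c, hc, hnc⟩ := GreedyState.empty.exists_card_copies_eq hrich hXY htiles htilesZ
    (fun d => hcard d ▸ hsupply) fun _ => ht
  obtain ⟨T, hTXY, hT⟩ := S.exists_isCluster hXY htiles htilesZ hc hnc
    (Nat.le_of_mul_le_mul_left (by linarith [hcard c]) Fintype.card_pos) hη0.le hnum
  exact ⟨T, by rw [← Finset.coe_union]; exact Finset.coe_subset.2 hTXY, hT⟩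

/-- The cluster-construction lemma: if `G` is `(H, η²s)`-rich, `X` and `Y` are disjoint
`s`-sets such that `G[X]` has a blue `H`-tiling with `s/k` copies and `G[Y]` a red
`H`-tiling with `s/k` copies, then some `T ⊆ X ∪ Y` spans an `(H,η)`-cluster. -/
theorem stmt11 {W V : Type*} [Fintype W] [DecidableEq V] (H : SimpleGraph W) (k α : ℕ)
    (hk : Fintype.card W = k) (hk3 : 3 ≤ k) (hα : _root_.indepNum H = α)
    (s : ℕ) (hs : 0 < s) (hdvd : 2 * k ∣ s)
    (η : ℝ) (hη0 : 0 < η) (hη1 : η < 1)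
    (G : SimpleGraph V) (χ : Sym2 V → Bool)
    (hrich : IsRich H G (Nat.floor (η ^ 2 * s)))
    (X Y : Finset V) (hXY : Disjoint X Y) (hX : X.card = s) (hY : Y.card = s)
    (hXb : MonoTilingOn H G χ false (↑X) (s / k))
    (hYr : MonoTilingOn H G χ true (↑Y) (s / k)) :
    ∃ T : Set V, T ⊆ ↑X ∪ ↑Y ∧ IsCluster H G χ k α η T :=
  stmt11_general H k α hk hk3 hα s hs hdvd η hη0 G χ hrich X Y hXY hX hY hXb hYr
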